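/- arXiv:1308.1359 — 10 statements merged into one kernel-verified Lean document; each statement's English description precedes it below -/
import Mathlib

section
/- Let Z be a square-integrable centred random field on an index set D with covariance kernel k, and let T = Σ_{i=1}^q α_i T_{v_i} be a finite linear combination of composition operators with symbols v_i : D → D and weights α_i ∈ ℝ. Then Z equals T(Z) up to a modification (i.e., for every x ∈ D, P(Z_x = Σ_i α_i Z_{v_i(x)}) = 1) if and only if k is T-invariant in its first argument, i.e., for all x, x' ∈ D, Σ_i α_i k(v_i(x), x') = k(x, x'). -/
/-!
Write `Y = Z x - ∑ i, α i * Z (v i x)`. By bilinearity of `(f, g) ↦ ∫ f * g` on `L²(μ)`, the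
kernel identity at `x` says exactly that `Y` is orthogonal to every `Z x'`. Since `Y` is itself a
combination of the `Z x'`, it is then orthogonal to itself, so `∫ Y ^ 2 = 0` and `Y = 0` a.e.
-/

open MeasureTheory

namespace MeasureTheory

variable {Ω : Type*} [MeasurableSpace Ω] {μ : Measure Ω}

theorem MemLp.integrable_mul_of_two {f g : Ω → ℝ} (hf : MemLp f 2 μ) (hg : MemLp g 2 μ) :
    Integrable (fun ω => f ω * g ω) μ :=
  hf.integrable_mul hg

theorem integral_sum_const_mul_mul {ι : Type*} (s : Finset ι) (a : ι → ℝ) {f : ι → Ω → ℝ}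
    {g : Ω → ℝ} (hf : ∀ i ∈ s, MemLp (f i) 2 μ) (hg : MemLp g 2 μ) :
    ∫ ω, (∑ i ∈ s, a i * f i ω) * g ω ∂μ = ∑ i ∈ s, a i * ∫ ω, f i ω * g ω ∂μ := by
  simp_rw [Finset.sum_mul, mul_assoc]
  rw [integral_finsetSum s fun i hi => ((hf i hi).integrable_mul_of_two hg).const_mul (a i)]
  simp_rw [integral_const_mul]

theorem ae_eq_zero_of_integral_mul_self_eq_zero {f : Ω → ℝ} (hf : MemLp f 2 μ)
    (h : ∫ ω, f ω * f ω ∂μ = 0) : f =ᵐ[μ] 0 := by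
  have hsq : (fun ω => f ω * f ω) =ᵐ[μ] 0 :=
    (integral_eq_zero_iff_of_nonneg (fun ω => mul_self_nonneg (f ω))
      (hf.integrable_mul_of_two hf)).1 h
  filter_upwards [hsq] with ω hω using mul_self_eq_zero.1 hω

theorem ae_eq_sum_of_integral_mul_eq_sum {ι : Type*} (s : Finset ι) (a : ι → ℝ) {f : Ω → ℝ}
    {g : ι → Ω → ℝ} (hf : MemLp f 2 μ) (hg : ∀ i ∈ s, MemLp (g i) 2 μ)
    (hff : ∑ i ∈ s, a i * ∫ ω, g i ω * f ω ∂μ = ∫ ω, f ω * f ω ∂μ)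
    (hfg : ∀ j ∈ s, ∑ i ∈ s, a i * ∫ ω, g i ω * g j ω ∂μ = ∫ ω, f ω * g j ω ∂μ) :
    ∀ᵐ ω ∂μ, f ω = ∑ i ∈ s, a i * g i ω := by
  set S : Ω → ℝ := fun ω => ∑ i ∈ s, a i * g i ω with hS_def
  have hS : MemLp S 2 μ := memLp_finsetSum s fun i hi => (hg i hi).const_mul (a i)
  have hY : MemLp (fun ω => f ω - S ω) 2 μ := hf.sub hS
  have orth : ∀ h, MemLp h 2 μ → ∑ i ∈ s, a i * ∫ ω, g i ω * h ω ∂μ = ∫ ω, f ω * h ω ∂μ →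
      ∫ ω, h ω * (f ω - S ω) ∂μ = 0 := by
    intro h hh hfh
    simp_rw [mul_sub, mul_comm (h _)]
    rw [integral_sub (hf.integrable_mul_of_two hh) (hS.integrable_mul_of_two hh), hS_def,
      integral_sum_const_mul_mul s a hg hh, hfh, sub_self]
  have hYY : ∫ ω, (f ω - S ω) * (f ω - S ω) ∂μ = 0 := by
    simp_rw [sub_mul (f _)]
    rw [integral_sub (hf.integrable_mul_of_two hY) (hS.integrable_mul_of_two hY), orth f hf hff,
      hS_def, integral_sum_const_mul_mul s a hg hY, zero_sub, neg_eq_zero]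
    exact Finset.sum_eq_zero fun i hi => by rw [orth (g i) (hg i hi) (hfg i hi), mul_zero]
  filter_upwards [ae_eq_zero_of_integral_mul_self_eq_zero hY hYY] with ω hω
  exact sub_eq_zero.1 hω

end MeasureTheory

theorem invariance_under_combination_of_composition_operators_general
    {Ω D : Type*} [MeasurableSpace Ω] (μ : Measure Ω)
    (Z : D → Ω → ℝ) (hL2 : ∀ x, MemLp (Z x) 2 μ)
    (k : D → D → ℝ) (hk : ∀ x x', k x x' = ∫ ω, Z x ω * Z x' ω ∂μ)
    (q : ℕ) (α : Fin q → ℝ) (v : Fin q → D → D) :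
    (∀ x, ∀ᵐ ω ∂μ, Z x ω = ∑ i, α i * Z (v i x) ω) ↔
      (∀ x x', ∑ i, α i * k (v i x) x' = k x x') := by
  simp only [hk]
  refine ⟨fun h x x' => ?_, fun h x => ?_⟩
  · rw [← integral_sum_const_mul_mul _ α (fun i _ => hL2 (v i x)) (hL2 x')]
    exact integral_congr_ae <| (h x).mono fun ω hω => by simp only [hω]
  · exact ae_eq_sum_of_integral_mul_eq_sum _ α (hL2 x) (fun i _ => hL2 (v i x)) (h x x)
      fun j _ => h x (v j x)

theorem invariance_under_combination_of_composition_operators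
    {Ω D : Type*} [MeasurableSpace Ω] (μ : Measure Ω) [IsProbabilityMeasure μ]
    (Z : D → Ω → ℝ) (hL2 : ∀ x, MemLp (Z x) 2 μ)
    (hcent : ∀ x, ∫ ω, Z x ω ∂μ = 0)
    (k : D → D → ℝ) (hk : ∀ x x', k x x' = ∫ ω, Z x ω * Z x' ω ∂μ)
    (q : ℕ) (α : Fin q → ℝ) (v : Fin q → D → D) :
    (∀ x, ∀ᵐ ω ∂μ, Z x ω = ∑ i, α i * Z (v i x) ω) ↔
      (∀ x x', ∑ i, α i * k (v i x) x' = k x x') :=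
  invariance_under_combination_of_composition_operators_general μ Z hL2 k hk q α v
end

section
/- Direction (⇐) of the invariance criterion: if Z is a square-integrable centred random field with covariance k and T = Σ_{i=1}^q α_i T_{v_i} is a combination of composition operators such that Σ_i α_i k(v_i(x), x') = k(x, x') for all x, x' ∈ D, then for every x ∈ D, Var(Z_x − Σ_i α_i Z_{v_i(x)}) = 0 and hence Z_x = Σ_i α_i Z_{v_i(x)} almost surely. -/
/-!
By the invariance hypothesis, the residual `R = Z x - ∑ i, α i * Z (v i x)` satisfies
`∫ R * Z y = k x y - ∑ i, α i * k (v i x) y = 0` for every `y`. Since `R` is itself a linear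
combination of values of the field, it is orthogonal to itself in `L²`, so `∫ R² = 0` and `R = 0`
almost surely.
-/

open MeasureTheory

section LinearCombination

variable {Ω ι : Type*} [MeasurableSpace Ω] {μ : Measure Ω}

lemma memLp_sub_sum {p : ENNReal} {a : Ω → ℝ} {b : ι → Ω → ℝ} (s : Finset ι) (c : ι → ℝ)
    (ha : MemLp a p μ) (hb : ∀ i, MemLp (b i) p μ) :
    MemLp (fun ω => a ω - ∑ i ∈ s, c i * b i ω) p μ :=
  ha.sub (memLp_finsetSum s fun i _ => (hb i).const_mul (c i))

lemma integral_sub_sum_mul {a g : Ω → ℝ} {b : ι → Ω → ℝ} (s : Finset ι) (c : ι → ℝ)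
    (ha : MemLp a 2 μ) (hb : ∀ i, MemLp (b i) 2 μ) (hg : MemLp g 2 μ) :
    ∫ ω, (a ω - ∑ i ∈ s, c i * b i ω) * g ω ∂μ
      = ∫ ω, a ω * g ω ∂μ - ∑ i ∈ s, c i * ∫ ω, b i ω * g ω ∂μ := by
  have hag : Integrable (fun ω => a ω * g ω) μ := ha.integrable_mul hg
  have hbg : ∀ i ∈ s, Integrable (fun ω => c i * (b i ω * g ω)) μ := fun i _ =>
    ((hb i).integrable_mul hg).const_mul (c i)
  simp_rw [sub_mul, Finset.sum_mul, mul_assoc]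
  rw [integral_sub hag (integrable_finsetSum s hbg), integral_finsetSum s hbg]
  simp_rw [integral_const_mul]

lemma integral_sub_sum_sq_eq_zero {a : Ω → ℝ} {b : ι → Ω → ℝ} (s : Finset ι) (c : ι → ℝ)
    (ha : MemLp a 2 μ) (hb : ∀ i, MemLp (b i) 2 μ)
    (horth_a : ∫ ω, (a ω - ∑ i ∈ s, c i * b i ω) * a ω ∂μ = 0)
    (horth_b : ∀ i ∈ s, ∫ ω, (a ω - ∑ i ∈ s, c i * b i ω) * b i ω ∂μ = 0) :
    ∫ ω, (a ω - ∑ i ∈ s, c i * b i ω) ^ 2 ∂μ = 0 := by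
  calc ∫ ω, (a ω - ∑ i ∈ s, c i * b i ω) ^ 2 ∂μ
      = ∫ ω, a ω * (a ω - ∑ i ∈ s, c i * b i ω) ∂μ
          - ∑ i ∈ s, c i * ∫ ω, b i ω * (a ω - ∑ i ∈ s, c i * b i ω) ∂μ := by
        rw [← integral_sub_sum_mul s c ha hb (memLp_sub_sum s c ha hb)]
        simp only [sq]
    _ = 0 := by
        simp only [mul_comm _ (a _ - _)]
        rw [horth_a, Finset.sum_eq_zero fun i hi => by rw [horth_b i hi, mul_zero], sub_zero]

lemma ae_eq_zero_of_integral_sq_eq_zero {f : Ω → ℝ} (hf : MemLp f 2 μ)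
    (h : ∫ ω, f ω ^ 2 ∂μ = 0) : ∀ᵐ ω ∂μ, f ω = 0 := by
  filter_upwards [(integral_eq_zero_iff_of_nonneg (fun ω => sq_nonneg (f ω)) hf.integrable_sq).mp h]
    with ω hω
  exact pow_eq_zero_iff two_ne_zero |>.mp hω

end LinearCombination

lemma integral_residual_mul_eq_zero {Ω D ι : Type*} [MeasurableSpace Ω] [Fintype ι]
    {μ : Measure Ω} {Z : D → Ω → ℝ} (hL2 : ∀ x, MemLp (Z x) 2 μ)
    {k : D → D → ℝ} (hk : ∀ x x', k x x' = ∫ ω, Z x ω * Z x' ω ∂μ)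
    {α : ι → ℝ} {v : ι → D → D} (hinv : ∀ x x', ∑ i, α i * k (v i x) x' = k x x') (x y : D) :
    ∫ ω, (Z x ω - ∑ i, α i * Z (v i x) ω) * Z y ω ∂μ = 0 := by
  rw [integral_sub_sum_mul _ α (hL2 x) (fun i => hL2 (v i x)) (hL2 y)]
  simp_rw [← hk]
  rw [hinv, sub_self]

theorem invariance_criterion_sufficiency_general
    {Ω D : Type*} [MeasurableSpace Ω] (μ : Measure Ω)
    (Z : D → Ω → ℝ) (hL2 : ∀ x, MemLp (Z x) 2 μ)
    (k : D → D → ℝ) (hk : ∀ x x', k x x' = ∫ ω, Z x ω * Z x' ω ∂μ)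
    (q : ℕ) (α : Fin q → ℝ) (v : Fin q → D → D)
    (hinv : ∀ x x', ∑ i, α i * k (v i x) x' = k x x') :
    ∀ x, (∫ ω, (Z x ω - ∑ i, α i * Z (v i x) ω) ^ 2 ∂μ = 0) ∧
      (∀ᵐ ω ∂μ, Z x ω = ∑ i, α i * Z (v i x) ω) := by
  intro x
  have horth := integral_residual_mul_eq_zero hL2 hk hinv x
  have hsq : ∫ ω, (Z x ω - ∑ i, α i * Z (v i x) ω) ^ 2 ∂μ = 0 :=
    integral_sub_sum_sq_eq_zero _ α (hL2 x) (fun i => hL2 (v i x)) (horth x)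
      fun i _ => horth (v i x)
  refine ⟨hsq, ?_⟩
  filter_upwards [ae_eq_zero_of_integral_sq_eq_zero
    (memLp_sub_sum _ α (hL2 x) fun i => hL2 (v i x)) hsq] with ω hω
  exact sub_eq_zero.mp hω

theorem invariance_criterion_sufficiency
    {Ω D : Type*} [MeasurableSpace Ω] (μ : Measure Ω) [IsProbabilityMeasure μ]
    (Z : D → Ω → ℝ) (hL2 : ∀ x, MemLp (Z x) 2 μ)
    (hcent : ∀ x, ∫ ω, Z x ω ∂μ = 0)
    (k : D → D → ℝ) (hk : ∀ x x', k x x' = ∫ ω, Z x ω * Z x' ω ∂μ)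
    (q : ℕ) (α : Fin q → ℝ) (v : Fin q → D → D)
    (hinv : ∀ x x', ∑ i, α i * k (v i x) x' = k x x') :
    ∀ x, (∫ ω, (Z x ω - ∑ i, α i * Z (v i x) ω) ^ 2 ∂μ = 0) ∧
      (∀ᵐ ω ∂μ, Z x ω = ∑ i, α i * Z (v i x) ω) :=
  invariance_criterion_sufficiency_general μ Z hL2 k hk q α v hinv
end

section
/- Let G be a finite group acting on D. A centred square-integrable random field Z with covariance kernel k has paths invariant under the group action up to a modification (for every g ∈ G and x ∈ D, P(Z_{g·x} = Z_x) = 1) if and only if k is argumentwise invariant: k(g·x, x') = k(x, x') for all g ∈ G and x, x' ∈ D. -/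
/-!
If `Z (g • x) = Z x` almost surely then the two covariance integrals agree pointwise in `x'`.
Conversely, argumentwise invariance together with the symmetry of `k` gives
`k (g • x) (g • x) = k (g • x) x = k x x`, so expanding the square,
`E[(Z (g • x) - Z x)²] = k (g • x) (g • x) - 2 k (g • x) x + k x x = 0`.
-/

open MeasureTheory

section SecondMoments

variable {Ω : Type*} [MeasurableSpace Ω] {μ : Measure Ω} {f g : Ω → ℝ}

theorem integral_sub_sq_of_memLp_two (hf : MemLp f 2 μ) (hg : MemLp g 2 μ) :
    ∫ ω, (f ω - g ω) ^ 2 ∂μ =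
      ∫ ω, f ω * f ω ∂μ - 2 * ∫ ω, f ω * g ω ∂μ + ∫ ω, g ω * g ω ∂μ := by
  have hff : Integrable (fun ω => f ω * f ω) μ := hf.integrable_mul hf
  have hfg : Integrable (fun ω => 2 * (f ω * g ω)) μ := (hf.integrable_mul hg).const_mul 2
  have hgg : Integrable (fun ω => g ω * g ω) μ := hg.integrable_mul hg
  have hffg : Integrable (fun ω => f ω * f ω - 2 * (f ω * g ω)) μ := hff.sub hfg
  calc ∫ ω, (f ω - g ω) ^ 2 ∂μ = ∫ ω, f ω * f ω - 2 * (f ω * g ω) + g ω * g ω ∂μ := by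
        congr with ω; ring
    _ = _ := by rw [integral_add hffg hgg, integral_sub hff hfg, integral_const_mul]

theorem ae_eq_of_integral_mul_self_eq_integral_mul (hf : MemLp f 2 μ) (hg : MemLp g 2 μ)
    (hff : ∫ ω, f ω * f ω ∂μ = ∫ ω, f ω * g ω ∂μ)
    (hgg : ∫ ω, g ω * g ω ∂μ = ∫ ω, f ω * g ω ∂μ) : f =ᵐ[μ] g := by
  have hsq : ∫ ω, (f ω - g ω) ^ 2 ∂μ = 0 := by
    rw [integral_sub_sq_of_memLp_two hf hg, hff, hgg]; ring
  have hzero := (integral_eq_zero_iff_of_nonneg (fun ω => sq_nonneg (f ω - g ω))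
    (hf.sub hg).integrable_sq).mp hsq
  filter_upwards [hzero] with ω hω
  exact sub_eq_zero.mp (pow_eq_zero_iff two_ne_zero |>.mp hω)

end SecondMoments

theorem group_invariance_of_paths_iff_argumentwise_invariant_kernel_general
    {Ω D G : Type*} [MeasurableSpace Ω] (μ : Measure Ω)
    [Group G] [MulAction G D]
    (Z : D → Ω → ℝ) (hL2 : ∀ x, MemLp (Z x) 2 μ)
    (k : D → D → ℝ) (hk : ∀ x x', k x x' = ∫ ω, Z x ω * Z x' ω ∂μ) :
    (∀ (g : G) (x : D), ∀ᵐ ω ∂μ, Z (g • x) ω = Z x ω) ↔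
      (∀ (g : G) (x x' : D), k (g • x) x' = k x x') := by
  constructor
  · intro hZ g x x'
    rw [hk, hk]
    exact integral_congr_ae (by filter_upwards [hZ g x] with ω hω; rw [hω])
  · intro hinv g x
    have hsymm : ∀ x x', k x x' = k x' x := fun x x' => by
      simp only [hk, mul_comm]
    have hcross : k (g • x) x = k x x := hinv g x x
    have hdiag : k (g • x) (g • x) = k x x := by
      rw [hinv g x (g • x), hsymm, hcross]
    refine ae_eq_of_integral_mul_self_eq_integral_mul (hL2 _) (hL2 x) ?_ ?_
    · rw [← hk, ← hk, hdiag, hcross]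
    · rw [← hk, ← hk, hcross]

theorem group_invariance_of_paths_iff_argumentwise_invariant_kernel
    {Ω D G : Type*} [MeasurableSpace Ω] (μ : Measure Ω) [IsProbabilityMeasure μ]
    [Group G] [Finite G] [MulAction G D]
    (Z : D → Ω → ℝ) (hL2 : ∀ x, MemLp (Z x) 2 μ)
    (hcent : ∀ x, ∫ ω, Z x ω ∂μ = 0)
    (k : D → D → ℝ) (hk : ∀ x x', k x x' = ∫ ω, Z x ω * Z x' ω ∂μ) :
    (∀ (g : G) (x : D), ∀ᵐ ω ∂μ, Z (g • x) ω = Z x ω) ↔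
      (∀ (g : G) (x x' : D), k (g • x) x' = k x x') :=
  group_invariance_of_paths_iff_argumentwise_invariant_kernel_general μ Z hL2 k hk
end

section
/- A centred square-integrable random field Z on D = Π_{i=1}^d D_i with covariance kernel k has additive paths up to a modification if and only if k can be written as k(x, x') = Σ_{i=1}^d Σ_{j=1}^d k_{ij}(x_i, x'_j) for some functions k_{ij} : D_i × D_j → ℝ. -/
/-!
Work in `L²(μ)` with `F x = [Z x]`, so that `k x x' = ⟪F x, F x'⟫`. Fix an anchor `c`. A function
`f` on `∏ D i` is additive iff it equals its anchored additive part
`x ↦ ∑ i, f (c with i-th coordinate x i) - (d - 1) f c`; this identity commutes with linear maps,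
so it transfers between the paths of `Z` and the `L²`-valued map `F`. If the kernel is a double
sum, then `k y ·` is additive for every `y`, hence `W = (anchored part of F) x - F x` is
orthogonal to every `F y`; since `W` is itself a combination of values of `F`, `W = 0`.
-/

open MeasureTheory
open scoped RealInnerProductSpace

section

variable {ι : Type*} [Fintype ι] {D : ι → Type*}

def IsAdditive {M : Type*} [AddCommMonoid M] (f : (∀ i, D i) → M) : Prop :=
  ∃ g : ∀ i, D i → M, ∀ x, f x = ∑ i, g i (x i)

section AnchoredDecomposition

variable [DecidableEq ι] {M : Type*} [AddCommGroup M]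

theorem sum_apply_update (g : ∀ i, D i → M) (c : ∀ i, D i) (i : ι) (v : D i) :
    ∑ j, g j (Function.update c i v j) = ∑ j, g j (c j) + (g i v - g i (c i)) := by
  rw [← sub_eq_iff_eq_add', ← Finset.sum_sub_distrib, Finset.sum_eq_single i]
  · simp
  · intro j _ hj
    simp [Function.update_of_ne hj]
  · simp

variable [Module ℝ M] {N : Type*} [AddCommGroup N] [Module ℝ N]

/-- The anchor value `f c` is shared equally among the `card ι` components, so that the result is
additive by construction; for empty `ι` the junk value `(0 - 1) / 0 = 0` is harmless. -/
noncomputable def anchoredAdditivePart (c : ∀ i, D i) (f : (∀ i, D i) → M) (x : ∀ i, D i) : M :=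
  ∑ i, (f (Function.update c i (x i)) - (((Fintype.card ι : ℝ) - 1) / Fintype.card ι) • f c)

theorem isAdditive_anchoredAdditivePart (c : ∀ i, D i) (f : (∀ i, D i) → M) :
    IsAdditive (anchoredAdditivePart c f) :=
  ⟨fun i t => f (Function.update c i t) - (((Fintype.card ι : ℝ) - 1) / Fintype.card ι) • f c,
    fun _ => rfl⟩

theorem IsAdditive.anchoredAdditivePart_eq {f : (∀ i, D i) → M} (hf : IsAdditive f)
    (c : ∀ i, D i) : anchoredAdditivePart c f = f := by
  obtain ⟨g, hg⟩ := hf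
  funext x
  set n : ℝ := (Fintype.card ι : ℝ)
  have hupdate : ∀ i, f (Function.update c i (x i)) = f c + (g i (x i) - g i (c i)) := by
    intro i
    rw [hg, hg c]
    exact sum_apply_update g c i (x i)
  have hcoeff : (n - 1 - n * ((n - 1) / n)) • f c = 0 := by
    rcases isEmpty_or_nonempty ι with hι | hι
    · simp [hg c]
    · rw [mul_div_cancel₀ _ (by positivity), sub_self, zero_smul]
  simp only [anchoredAdditivePart, hupdate, Finset.sum_sub_distrib, Finset.sum_add_distrib,
    Finset.sum_const, Finset.card_univ, ← hg x, ← hg c, ← Nat.cast_smul_eq_nsmul ℝ]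
  linear_combination (norm := module) hcoeff

theorem isAdditive_iff_anchoredAdditivePart_eq (c : ∀ i, D i) {f : (∀ i, D i) → M} :
    IsAdditive f ↔ anchoredAdditivePart c f = f :=
  ⟨fun hf => hf.anchoredAdditivePart_eq c, fun h => h ▸ isAdditive_anchoredAdditivePart c f⟩

theorem LinearMap.map_anchoredAdditivePart (L : M →ₗ[ℝ] N) (c : ∀ i, D i)
    (f : (∀ i, D i) → M) (x : ∀ i, D i) :
    L (anchoredAdditivePart c f x) = anchoredAdditivePart c (L ∘ f) x := by
  simp [anchoredAdditivePart]

end AnchoredDecomposition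

section InnerProductSpace

variable {H : Type*} [NormedAddCommGroup H] [InnerProductSpace ℝ H]

theorem IsAdditive.exists_inner_eq_double_sum {F : (∀ i, D i) → H} (hF : IsAdditive F) :
    ∃ κ : ∀ i j, D i → D j → ℝ, ∀ x x', ⟪F x, F x'⟫ = ∑ i, ∑ j, κ i j (x i) (x' j) := by
  obtain ⟨g, hg⟩ := hF
  exact ⟨fun i j s t => ⟪g i s, g j t⟫, fun x x' => by
    rw [hg x, hg x', sum_inner]
    simp_rw [inner_sum]⟩

theorem isAdditive_inner_right_of_eq_double_sum {F : (∀ i, D i) → H}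
    {κ : ∀ i j, D i → D j → ℝ} (hκ : ∀ x x', ⟪F x, F x'⟫ = ∑ i, ∑ j, κ i j (x i) (x' j))
    (y : ∀ i, D i) : IsAdditive fun x => ⟪F y, F x⟫ :=
  ⟨fun j t => ∑ i, κ i j (y i) t, fun x => (hκ y x).trans Finset.sum_comm⟩

theorem isAdditive_of_forall_isAdditive_inner [DecidableEq ι] [∀ i, Nonempty (D i)]
    {F : (∀ i, D i) → H} (hF : ∀ y, IsAdditive fun x => ⟪F y, F x⟫) : IsAdditive F := by
  let c : ∀ i, D i := fun i => Classical.arbitrary (D i)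
  rw [isAdditive_iff_anchoredAdditivePart_eq c]
  funext x
  have inner_anchored : ∀ v, ⟪v, anchoredAdditivePart c F x⟫
      = anchoredAdditivePart c (fun x' => ⟪v, F x'⟫) x :=
    fun v => (innerₛₗ ℝ v).map_anchoredAdditivePart c F x
  set W := anchoredAdditivePart c F x - F x
  have hW : ∀ y, ⟪F y, W⟫ = 0 := fun y => by
    rw [inner_sub_right, inner_anchored, (hF y).anchoredAdditivePart_eq, sub_self]
  have hWW : ⟪W, W⟫ = 0 := by
    have hW' : (fun x' => ⟪W, F x'⟫) = 0 :=
      funext fun x' => by rw [real_inner_comm, hW, Pi.zero_apply]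
    rw [inner_sub_right, inner_anchored, hW', real_inner_comm, hW]
    simp [anchoredAdditivePart]
  exact sub_eq_zero.1 (inner_self_eq_zero.1 hWW)

theorem isAdditive_iff_exists_inner_eq_double_sum [DecidableEq ι] [∀ i, Nonempty (D i)]
    {F : (∀ i, D i) → H} :
    IsAdditive F ↔
      ∃ κ : ∀ i j, D i → D j → ℝ, ∀ x x', ⟪F x, F x'⟫ = ∑ i, ∑ j, κ i j (x i) (x' j) :=
  ⟨IsAdditive.exists_inner_eq_double_sum, fun ⟨_, hκ⟩ =>
    isAdditive_of_forall_isAdditive_inner (isAdditive_inner_right_of_eq_double_sum hκ)⟩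

end InnerProductSpace

section Lp

variable {Ω : Type*} [MeasurableSpace Ω] {μ : Measure Ω} {p : ENNReal}

theorem MeasureTheory.Lp.coeFn_finset_sum {α E : Type*} [NormedAddCommGroup E] (s : Finset α)
    (f : α → Lp E p μ) : ⇑(∑ i ∈ s, f i) =ᵐ[μ] ∑ i ∈ s, ⇑(f i) := by
  classical
  induction s using Finset.induction_on with
  | empty => simpa using Lp.coeFn_zero E p μ
  | insert a s ha ih =>
    simp only [Finset.sum_insert ha]
    exact (Lp.coeFn_add _ _).trans (Filter.EventuallyEq.rfl.add ih)

theorem coeFn_anchoredAdditivePart_toLp [DecidableEq ι] {A : (∀ i, D i) → Ω → ℝ}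
    (hA : ∀ x, MemLp (A x) p μ) (c x : ∀ i, D i) :
    ⇑(anchoredAdditivePart c (fun y => (hA y).toLp (A y)) x)
      =ᵐ[μ] fun ω => anchoredAdditivePart c (fun y => A y ω) x := by
  set r : ℝ := ((Fintype.card ι : ℝ) - 1) / Fintype.card ι
  set F : (∀ i, D i) → Lp ℝ p μ := fun y => (hA y).toLp (A y)
  have hterms : ∀ᵐ ω ∂μ, ∀ i, (F (Function.update c i (x i)) - r • F c) ω
      = A (Function.update c i (x i)) ω - r * A c ω := by
    refine ae_all_iff.2 fun i => ?_
    filter_upwards [Lp.coeFn_sub (F (Function.update c i (x i))) (r • F c),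
      Lp.coeFn_smul r (F c), (hA c).coeFn_toLp, (hA (Function.update c i (x i))).coeFn_toLp]
      with ω h₁ h₂ h₃ h₄
    rw [h₁, Pi.sub_apply, h₂, Pi.smul_apply, h₃, h₄, smul_eq_mul]
  filter_upwards [Lp.coeFn_finset_sum Finset.univ fun i => F (Function.update c i (x i)) - r • F c,
    hterms] with ω hsum hterms
  rw [anchoredAdditivePart, hsum, Finset.sum_apply]
  exact Finset.sum_congr rfl fun i _ => hterms i

theorem isAdditive_toLp_of_forall_isAdditive [DecidableEq ι] [∀ i, Nonempty (D i)]
    {A : (∀ i, D i) → Ω → ℝ} (hA : ∀ x, MemLp (A x) p μ)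
    (hadd : ∀ ω, IsAdditive fun x => A x ω) : IsAdditive fun x => (hA x).toLp (A x) := by
  let c : ∀ i, D i := fun i => Classical.arbitrary (D i)
  rw [isAdditive_iff_anchoredAdditivePart_eq c]
  funext x
  refine Lp.ext ?_
  filter_upwards [coeFn_anchoredAdditivePart_toLp hA c x, (hA x).coeFn_toLp] with ω h₁ h₂
  rw [h₁, h₂, (hadd ω).anchoredAdditivePart_eq c]

theorem IsAdditive.exists_additive_ae_eq {Z : (∀ i, D i) → Ω → ℝ} (hZ : ∀ x, MemLp (Z x) p μ)
    (h : IsAdditive fun x => (hZ x).toLp (Z x)) :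
    ∃ A : (∀ i, D i) → Ω → ℝ, (∀ ω, IsAdditive fun x => A x ω) ∧ ∀ x, Z x =ᵐ[μ] A x := by
  obtain ⟨G, hG⟩ := h
  refine ⟨fun x ω => ∑ i, G i (x i) ω, fun ω => ⟨fun i t => G i t ω, fun _ => rfl⟩, fun x => ?_⟩
  filter_upwards [(hZ x).coeFn_toLp.symm, Lp.coeFn_finset_sum Finset.univ fun i => G i (x i)]
    with ω h₁ h₂
  rw [h₁, show (hZ x).toLp (Z x) = _ from hG x, h₂, Finset.sum_apply]

theorem exists_additive_ae_eq_iff_isAdditive_toLp [DecidableEq ι] [∀ i, Nonempty (D i)]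
    {Z : (∀ i, D i) → Ω → ℝ} (hZ : ∀ x, MemLp (Z x) p μ) :
    (∃ A : (∀ i, D i) → Ω → ℝ, (∀ ω, IsAdditive fun x => A x ω) ∧ ∀ x, Z x =ᵐ[μ] A x) ↔
      IsAdditive fun x => (hZ x).toLp (Z x) := by
  refine ⟨fun ⟨A, hadd, hZA⟩ => ?_, IsAdditive.exists_additive_ae_eq hZ⟩
  have hA : ∀ x, MemLp (A x) p μ := fun x => (hZ x).ae_eq (hZA x)
  convert isAdditive_toLp_of_forall_isAdditive hA hadd using 2 with x
  exact MemLp.toLp_congr _ _ (hZA x)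

theorem MeasureTheory.L2.inner_toLp_toLp {f g : Ω → ℝ} (hf : MemLp f 2 μ) (hg : MemLp g 2 μ) :
    ⟪hf.toLp f, hg.toLp g⟫ = ∫ ω, f ω * g ω ∂μ := by
  rw [L2.inner_def]
  refine integral_congr_ae ?_
  filter_upwards [hf.coeFn_toLp, hg.coeFn_toLp] with ω h₁ h₂
  rw [h₁, h₂, RCLike.inner_apply', conj_trivial]

end Lp

end

theorem additive_paths_iff_double_sum_kernel_general
    {Ω : Type*} [MeasurableSpace Ω] (μ : Measure Ω)
    {d : ℕ} {D : Fin d → Type*} [∀ i, Nonempty (D i)]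
    (Z : (∀ i, D i) → Ω → ℝ) (hL2 : ∀ x, MemLp (Z x) 2 μ)
    (k : (∀ i, D i) → (∀ i, D i) → ℝ)
    (hk : ∀ x x', k x x' = ∫ ω, Z x ω * Z x' ω ∂μ) :
    (∃ A : (∀ i, D i) → Ω → ℝ,
        (∀ ω, ∃ g : ∀ i, D i → ℝ, ∀ x, A x ω = ∑ i, g i (x i)) ∧
        (∀ x, ∀ᵐ ω ∂μ, Z x ω = A x ω)) ↔
      (∃ κ : ∀ i j, D i → D j → ℝ, ∀ x x', k x x' = ∑ i, ∑ j, κ i j (x i) (x' j)) := by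
  have hgram : k = fun x x' => ⟪(hL2 x).toLp (Z x), (hL2 x').toLp (Z x')⟫ := by
    funext x x'
    rw [hk, L2.inner_toLp_toLp]
  rw [hgram]
  exact (exists_additive_ae_eq_iff_isAdditive_toLp hL2).trans
    (isAdditive_iff_exists_inner_eq_double_sum (F := fun x => (hL2 x).toLp (Z x)))

theorem additive_paths_iff_double_sum_kernel
    {Ω : Type*} [MeasurableSpace Ω] (μ : Measure Ω) [IsProbabilityMeasure μ]
    {d : ℕ} {D : Fin d → Type*} [∀ i, Nonempty (D i)]
    (Z : (∀ i, D i) → Ω → ℝ) (hL2 : ∀ x, MemLp (Z x) 2 μ)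
    (hcent : ∀ x, ∫ ω, Z x ω ∂μ = 0)
    (k : (∀ i, D i) → (∀ i, D i) → ℝ)
    (hk : ∀ x x', k x x' = ∫ ω, Z x ω * Z x' ω ∂μ) :
    (∃ A : (∀ i, D i) → Ω → ℝ,
        (∀ ω, ∃ g : ∀ i, D i → ℝ, ∀ x, A x ω = ∑ i, g i (x i)) ∧
        (∀ x, ∀ᵐ ω ∂μ, Z x ω = A x ω)) ↔
      (∃ κ : ∀ i j, D i → D j → ℝ, ∀ x x', k x x' = ∑ i, ∑ j, κ i j (x i) (x' j)) :=
  additive_paths_iff_double_sum_kernel_general μ Z hL2 k hk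
end

section
/- Let H be the RKHS of a kernel k on D and Z a centred Gaussian field with covariance k. Suppose T acts on the paths of Z with T(Z)_x ∈ L(Z) := closure of span{Z_x : x ∈ D} in L² for every x ∈ D. Then there exists a unique linear operator 𝒯 : H → ℝ^D satisfying cov(T(Z)_x, Z_{x'}) = 𝒯(k(·, x'))(x) for all x, x' ∈ D and such that 𝒯(h_n)(x) → 𝒯(h)(x) pointwise whenever h_n → h in H; it is given by 𝒯(h)(x) = cov(T(Z)_x, Ψ(h)), where Ψ : H → L(Z) is the Loève isometry. -/
open MeasureTheory Filter
open scoped RealInnerProductSpace Topology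

/-!
The operator `h ↦ (x ↦ ⟪TZ x, Ψ h⟫)` is continuous linear, since `Ψ` is an isometry, and matches the
covariances on the kernel sections `φ x'` because `Ψ (φ x') = Z x'`. Any other linear operator with
these two properties is continuous (pointwise sequential continuity suffices on a metric space), so it
agrees with this one on the closure of the span of the kernel sections, which is all of `H`.
-/

section

variable {H E D : Type*} [NormedAddCommGroup H] [InnerProductSpace ℝ H]
  [NormedAddCommGroup E] [InnerProductSpace ℝ E]

noncomputable def inducedOperator (v : D → E) (Ψ : H →L[ℝ] E) : H →L[ℝ] (D → ℝ) :=
  ContinuousLinearMap.pi fun x => (innerSL ℝ (v x)).comp Ψ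

@[simp]
theorem inducedOperator_apply (v : D → E) (Ψ : H →L[ℝ] E) (h : H) (x : D) :
    inducedOperator v Ψ h x = ⟪v x, Ψ h⟫ :=
  rfl

end

theorem continuous_pi_of_tendsto_apply {X D : Type*} {Y : D → Type*} [TopologicalSpace X]
    [SequentialSpace X] [∀ x, TopologicalSpace (Y x)] {f : X → ∀ x, Y x}
    (hf : ∀ (u : ℕ → X) (a : X), Tendsto u atTop (𝓝 a) →
      ∀ x, Tendsto (fun n => f (u n) x) atTop (𝓝 (f a x))) :
    Continuous f :=
  continuous_pi fun x => continuous_iff_seqContinuous.2 fun u a hu => hf u a hu x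

theorem induced_operator_on_RKHS_exists_unique_general
    {Ω D : Type*} [MeasurableSpace Ω] {μ : Measure Ω}
    {H : Type*} [NormedAddCommGroup H] [InnerProductSpace ℝ H]
    (φ : D → H)
    (hdense : Dense (Submodule.span ℝ (Set.range φ) : Set H))
    (Z TZ : D → Lp ℝ 2 μ)
    (Ψ : H →ₗᵢ[ℝ] Lp ℝ 2 μ) (hΨ : ∀ x, Ψ (φ x) = Z x) :
    (∃! 𝒯 : H →ₗ[ℝ] (D → ℝ),
        (∀ x x', ⟪TZ x, Z x'⟫ = 𝒯 (φ x') x) ∧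
        (∀ (h : ℕ → H) (h₀ : H), Tendsto h atTop (nhds h₀) →
          ∀ x, Tendsto (fun n => 𝒯 (h n) x) atTop (nhds (𝒯 h₀ x)))) ∧
    (∀ 𝒯 : H →ₗ[ℝ] (D → ℝ),
        ((∀ x x', ⟪TZ x, Z x'⟫ = 𝒯 (φ x') x) ∧
         (∀ (h : ℕ → H) (h₀ : H), Tendsto h atTop (nhds h₀) →
          ∀ x, Tendsto (fun n => 𝒯 (h n) x) atTop (nhds (𝒯 h₀ x)))) →
        ∀ (h : H) (x : D), 𝒯 h x = ⟪TZ x, Ψ h⟫) := by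
  set T := inducedOperator TZ Ψ.toContinuousLinearMap
  have hT_cov : ∀ x x', ⟪TZ x, Z x'⟫ = T (φ x') x := by simp [T, hΨ]
  have hT_tendsto : ∀ (h : ℕ → H) (h₀ : H), Tendsto h atTop (𝓝 h₀) →
      ∀ x, Tendsto (fun n => T (h n) x) atTop (𝓝 (T h₀ x)) := fun h h₀ hh x =>
    (((continuous_apply x).comp T.continuous).tendsto h₀).comp hh
  have hT_unique : ∀ 𝒯 : H →ₗ[ℝ] (D → ℝ),
      ((∀ x x', ⟪TZ x, Z x'⟫ = 𝒯 (φ x') x) ∧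
       (∀ (h : ℕ → H) (h₀ : H), Tendsto h atTop (𝓝 h₀) →
        ∀ x, Tendsto (fun n => 𝒯 (h n) x) atTop (𝓝 (𝒯 h₀ x)))) → 𝒯 = T := by
    rintro 𝒯 ⟨hcov, htendsto⟩
    let 𝒯c : H →L[ℝ] (D → ℝ) := ⟨𝒯, continuous_pi_of_tendsto_apply htendsto⟩
    have h𝒯c : 𝒯c = T := ContinuousLinearMap.ext_on hdense <| by
      rintro _ ⟨x', rfl⟩
      funext x
      exact (hcov x x').symm.trans (hT_cov x x')
    exact congrArg ContinuousLinearMap.toLinearMap h𝒯c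
  refine ⟨⟨T, ⟨hT_cov, hT_tendsto⟩, hT_unique⟩, fun 𝒯 h𝒯 h x => ?_⟩
  rw [hT_unique 𝒯 h𝒯]
  rfl

theorem induced_operator_on_RKHS_exists_unique
    {Ω D : Type*} [MeasurableSpace Ω] {μ : Measure Ω} [IsProbabilityMeasure μ]
    {H : Type*} [NormedAddCommGroup H] [InnerProductSpace ℝ H] [CompleteSpace H]
    (k : D → D → ℝ) (φ : D → H) (hφ : ∀ x x', ⟪φ x, φ x'⟫ = k x x')
    (hdense : Dense (Submodule.span ℝ (Set.range φ) : Set H))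
    (Z TZ : D → Lp ℝ 2 μ)
    (hk : ∀ x x', k x x' = ⟪Z x, Z x'⟫)
    (hTZ : ∀ x, TZ x ∈ closure (Submodule.span ℝ (Set.range Z) : Set (Lp ℝ 2 μ)))
    (Ψ : H →ₗᵢ[ℝ] Lp ℝ 2 μ) (hΨ : ∀ x, Ψ (φ x) = Z x) :
    (∃! 𝒯 : H →ₗ[ℝ] (D → ℝ),
        (∀ x x', ⟪TZ x, Z x'⟫ = 𝒯 (φ x') x) ∧
        (∀ (h : ℕ → H) (h₀ : H), Tendsto h atTop (nhds h₀) →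
          ∀ x, Tendsto (fun n => 𝒯 (h n) x) atTop (nhds (𝒯 h₀ x)))) ∧
    (∀ 𝒯 : H →ₗ[ℝ] (D → ℝ),
        ((∀ x x', ⟪TZ x, Z x'⟫ = 𝒯 (φ x') x) ∧
         (∀ (h : ℕ → H) (h₀ : H), Tendsto h atTop (nhds h₀) →
          ∀ x, Tendsto (fun n => 𝒯 (h n) x) atTop (nhds (𝒯 h₀ x)))) →
        ∀ (h : H) (x : D), 𝒯 h x = ⟪TZ x, Ψ h⟫) :=
  induced_operator_on_RKHS_exists_unique_general φ hdense Z TZ Ψ hΨ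
end

section
/- Under the hypotheses of the Loève-isometry construction (Z centred Gaussian with continuous kernel k on compact D, T linear with T(Z)_x ∈ L(Z) for all x, and 𝒯 the induced operator on the RKHS H), the following are equivalent: (i) Z = T(Z) up to a modification; (ii) 𝒯(k(·, x')) = k(·, x') for all x' ∈ D; (iii) 𝒯 is the identity on H. -/
/-!
Condition (ii) says `⟪T(Z)_x, Z_{x'}⟫ = ⟪Z_x, Z_{x'}⟫` for all `x, x'`. Since `T(Z)_x - Z_x` lies in
`L(Z)`, the closed span of the `Z_{x'}`, and is orthogonal to all of them, it vanishes: this is (i).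
Through the Loève isometry `Ψ`, (ii) says that the continuous functionals `h ↦ 𝒯 h x` and
`h ↦ ⟪h, k(·, x)⟫` agree on the `k(·, x')`, whose span is dense in `H`; hence they agree everywhere,
which is (iii).
-/

open MeasureTheory Submodule
open scoped RealInnerProductSpace InnerProductSpace

section InnerProductSpace

variable {𝕜 E H : Type*} [RCLike 𝕜]
  [NormedAddCommGroup E] [InnerProductSpace 𝕜 E] [NormedAddCommGroup H] [InnerProductSpace 𝕜 H]

theorem eq_of_mem_closure_span_of_inner_eq {s : Set E} {u v : E}
    (hu : u ∈ closure (span 𝕜 s : Set E)) (hv : v ∈ closure (span 𝕜 s : Set E))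
    (h : ∀ z ∈ s, ⟪z, u⟫_𝕜 = ⟪z, v⟫_𝕜) : u = v := by
  have hmem : u - v ∈ (span 𝕜 s).topologicalClosure := by
    rw [← topologicalClosure_coe] at hu hv
    exact sub_mem hu hv
  have horth : u - v ∈ (span 𝕜 s)ᗮ := by
    refine (mem_orthogonal _ _).2 fun y hy => ?_
    induction hy using span_induction with
    | mem z hz => rw [inner_sub_right, h z hz, sub_self]
    | zero => exact inner_zero_left _
    | add a b _ _ ha hb => rw [inner_add_left, ha, hb, add_zero]
    | smul c a _ ha => rw [inner_smul_left, ha, mul_zero]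
  rw [← orthogonal_closure] at horth
  exact sub_eq_zero.1 (disjoint_def.1 (orthogonal_disjoint _) _ hmem horth)

theorem inner_apply_eq_inner_of_dense_span {ι : Type*} {φ : ι → H}
    (hφ : Dense (span 𝕜 (Set.range φ) : Set H)) (A : H →L[𝕜] E) (a : E) (b : H)
    (h : ∀ i, ⟪a, A (φ i)⟫_𝕜 = ⟪b, φ i⟫_𝕜) (y : H) : ⟪a, A y⟫_𝕜 = ⟪b, y⟫_𝕜 := by
  have hext : (innerSL 𝕜 a).comp A = innerSL 𝕜 b :=
    ContinuousLinearMap.ext_on hφ <| by rintro _ ⟨i, rfl⟩; exact h i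
  exact DFunLike.congr_fun hext y

end InnerProductSpace

theorem invariance_equivalences_via_loeve_isometry_general
    {d : ℕ} {Dset : Set (EuclideanSpace ℝ (Fin d))}
    {Ω : Type*} [MeasurableSpace Ω] {μ : Measure Ω}
    {H : Type*} [NormedAddCommGroup H] [InnerProductSpace ℝ H]
    (k : Dset → Dset → ℝ)
    (Z TZ : Dset → Lp ℝ 2 μ) (hk : ∀ x x', k x x' = ⟪Z x, Z x'⟫)
    (hTZ : ∀ x, TZ x ∈ closure (Submodule.span ℝ (Set.range Z) : Set (Lp ℝ 2 μ)))
    (φ : Dset → H) (hφ : ∀ x x', ⟪φ x, φ x'⟫ = k x x')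
    (hdense : Dense (Submodule.span ℝ (Set.range φ) : Set H))
    (Ψ : H →ₗᵢ[ℝ] Lp ℝ 2 μ) (hΨ : ∀ x, Ψ (φ x) = Z x)
    (𝒯 : H →ₗ[ℝ] (Dset → ℝ)) (h𝒯 : ∀ h x, 𝒯 h x = ⟪TZ x, Ψ h⟫) :
    ((∀ x, TZ x = Z x) ↔ (∀ x', 𝒯 (φ x') = fun x => k x x')) ∧
    ((∀ x', 𝒯 (φ x') = fun x => k x x') ↔ (∀ h x, 𝒯 h x = ⟪h, φ x⟫)) := by
  have h𝒯φ : ∀ x x', 𝒯 (φ x') x = ⟪TZ x, Z x'⟫ := fun x x' => by rw [h𝒯, hΨ]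
  refine ⟨⟨fun hinv x' => funext fun x => by rw [h𝒯φ, hinv, hk], fun hfix x => ?_⟩,
    ⟨fun hfix h x => ?_, fun hid x' => funext fun x => by rw [hid, hφ, hk, hk, real_inner_comm]⟩⟩
  · refine eq_of_mem_closure_span_of_inner_eq (hTZ x)
      (subset_closure (subset_span ⟨x, rfl⟩)) ?_
    rintro _ ⟨x', rfl⟩
    calc ⟪Z x', TZ x⟫ = 𝒯 (φ x') x := by rw [h𝒯φ, real_inner_comm]
      _ = k x x' := congrFun (hfix x') x
      _ = ⟪Z x', Z x⟫ := by rw [hk, real_inner_comm]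
  · rw [h𝒯, real_inner_comm (φ x)]
    refine inner_apply_eq_inner_of_dense_span hdense Ψ.toContinuousLinearMap _ _ (fun x' => ?_) h
    calc ⟪TZ x, Ψ.toContinuousLinearMap (φ x')⟫ = 𝒯 (φ x') x := (h𝒯 _ _).symm
      _ = k x x' := congrFun (hfix x') x
      _ = ⟪φ x, φ x'⟫ := (hφ x x').symm

theorem invariance_equivalences_via_loeve_isometry
    {d : ℕ} {Dset : Set (EuclideanSpace ℝ (Fin d))} (hD : IsCompact Dset)
    {Ω : Type*} [MeasurableSpace Ω] {μ : Measure Ω} [IsProbabilityMeasure μ]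
    {H : Type*} [NormedAddCommGroup H] [InnerProductSpace ℝ H] [CompleteSpace H]
    (k : Dset → Dset → ℝ) (hkcont : Continuous fun p : Dset × Dset => k p.1 p.2)
    (Z TZ : Dset → Lp ℝ 2 μ) (hk : ∀ x x', k x x' = ⟪Z x, Z x'⟫)
    (hTZ : ∀ x, TZ x ∈ closure (Submodule.span ℝ (Set.range Z) : Set (Lp ℝ 2 μ)))
    (φ : Dset → H) (hφ : ∀ x x', ⟪φ x, φ x'⟫ = k x x')
    (hdense : Dense (Submodule.span ℝ (Set.range φ) : Set H))
    (Ψ : H →ₗᵢ[ℝ] Lp ℝ 2 μ) (hΨ : ∀ x, Ψ (φ x) = Z x)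
    (𝒯 : H →ₗ[ℝ] (Dset → ℝ)) (h𝒯 : ∀ h x, 𝒯 h x = ⟪TZ x, Ψ h⟫) :
    ((∀ x, TZ x = Z x) ↔ (∀ x', 𝒯 (φ x') = fun x => k x x')) ∧
    ((∀ x', 𝒯 (φ x') = fun x => k x x') ↔ (∀ h x, 𝒯 h x = ⟪h, φ x⟫)) :=
  invariance_equivalences_via_loeve_isometry_general k Z TZ hk hTZ φ hφ hdense Ψ hΨ 𝒯 h𝒯
end

section
/- Given a kernel k and a probability measure ν with ∫√(k(u,u))dν(u) < ∞, the function k₀(x,y) = k(x,y) − ∫k(x,u)dν(u) − ∫k(y,u)dν(u) + ∬k(u,v)dν(u)dν(v) is a positive semi-definite kernel and satisfies ∫ k₀(x,u) dν(u) = 0 for every x. -/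
/-!
Writing `φ` for a feature map of `k` and `m` for the mean of `φ` under `ν`, the centred kernel is
`k₀ x y = ⟪φ x - m, φ y - m⟫`. Without a feature map, `∑ cᵢ cⱼ k₀ xᵢ xⱼ` is the `ν ⊗ ν`-integral
of the kernel `⟪∑ cᵢ φ xᵢ - s φ u, ∑ cᵢ φ xᵢ - s φ v⟫`, `s = ∑ cᵢ`, which is again positive
semidefinite. A positive semidefinite kernel `g` has nonnegative double integral: if its diagonal
is integrable, integrating the `n`-point inequality `0 ≤ ∑ᵢⱼ g Xᵢ Xⱼ` against `νⁿ` gives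
`0 ≤ n a + n (n - 1) b`, with `a` the integral of the diagonal and `b` the double integral, so
`b ≥ 0`; in general, restrict `g` to the sets where the diagonal is at most `M` and let `M → ∞`
by dominated convergence.
-/

open MeasureTheory ProbabilityTheory Filter Topology

def IsPosSemidefKernel {D : Type*} (k : D → D → ℝ) : Prop :=
  ∀ (n : ℕ) (c : Fin n → ℝ) (x : Fin n → D), 0 ≤ ∑ i, ∑ j, c i * c j * k (x i) (x j)

theorem Finset.sum_sum_mul_mul_sub_sub_add {ι : Type*} [Fintype ι] (d : ι → ℝ)
    (K : ι → ι → ℝ) (φ : ι → ℝ) (C : ℝ) :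
    ∑ a, ∑ b, d a * d b * (K a b - φ a - φ b + C) =
      ∑ a, ∑ b, d a * d b * K a b - 2 * (∑ a, d a) * (∑ a, d a * φ a) + (∑ a, d a) ^ 2 * C := by
  have hφ : ∑ a, ∑ b, d a * d b * φ b = (∑ a, d a) * ∑ a, d a * φ a := by
    simp only [mul_assoc, Finset.sum_mul_sum]
  have hφ' : ∑ a, ∑ b, d a * d b * φ a = (∑ a, d a) * ∑ a, d a * φ a := by
    rw [Finset.sum_comm, ← hφ]
    simp only [mul_comm (d _) (d _)]
  have hC : ∑ a, ∑ b, d a * d b * C = (∑ a, d a) ^ 2 * C := by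
    rw [sq, Finset.sum_mul_sum, Finset.sum_mul]
    simp only [Finset.sum_mul]
  simp only [mul_add, mul_sub, Finset.sum_add_distrib, Finset.sum_sub_distrib, hφ, hφ', hC]
  ring

theorem nonneg_of_forall_nat_mul_add_nonneg {a b : ℝ}
    (h : ∀ n : ℕ, 0 ≤ n * a + n * (n - 1) * b) : 0 ≤ b := by
  by_contra! hb
  obtain ⟨N, hN⟩ := exists_nat_gt (a / -b)
  have hN' : a + N * b < 0 := by
    rw [div_lt_iff₀ (neg_pos.mpr hb)] at hN
    linarith
  have := h (N + 1)
  push_cast at this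
  nlinarith

namespace IsPosSemidefKernel

variable {D : Type*} {k : D → D → ℝ}

theorem sum_nonneg (hk : IsPosSemidefKernel k) {ι : Type*} [Fintype ι] (c : ι → ℝ)
    (x : ι → D) : 0 ≤ ∑ i, ∑ j, c i * c j * k (x i) (x j) := by
  let e := (Fintype.equivFin ι).symm
  have h := hk _ (fun i => c (e i)) (fun i => x (e i))
  rwa [Fintype.sum_equiv e _ (fun i => ∑ j, c i * c j * k (x i) (x j))
    fun a => Fintype.sum_equiv e _ _ fun b => rfl] at h

theorem diag_nonneg (hk : IsPosSemidefKernel k) (u : D) : 0 ≤ k u u := by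
  simpa using hk 1 (fun _ => 1) (fun _ => u)

theorem mul_weight (hk : IsPosSemidefKernel k) (w : D → ℝ) :
    IsPosSemidefKernel fun u v => w u * w v * k u v := by
  intro n c x
  convert hk n (fun i => c i * w (x i)) x using 3
  ring

end IsPosSemidefKernel

/-- `⟪m - s φ u, m - s φ v⟫` for a feature map `φ` of `k` and `m = ∑ i, c i • φ (x i)`. -/
def shiftedKernel {D ι : Type*} [Fintype ι] (k : D → D → ℝ) (c : ι → ℝ) (x : ι → D) (s : ℝ)
    (u v : D) : ℝ :=
  s ^ 2 * k u v - s * ∑ i, c i * k (x i) u - s * ∑ i, c i * k (x i) v +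
    ∑ i, ∑ j, c i * c j * k (x i) (x j)

theorem IsPosSemidefKernel.shiftedKernel {D ι : Type*} [Fintype ι] {k : D → D → ℝ}
    (hk : IsPosSemidefKernel k) (hsymm : ∀ u v, k u v = k v u) (c : ι → ℝ) (x : ι → D) (s : ℝ) :
    IsPosSemidefKernel (shiftedKernel k c x s) := by
  intro m d y
  set T := ∑ a, d a
  set Q := ∑ i, ∑ j, c i * c j * k (x i) (x j)
  set P := ∑ a, ∑ b, d a * d b * k (y a) (y b)
  set R := ∑ i, ∑ a, c i * d a * k (x i) (y a)
  have h := hk.sum_nonneg (Sum.elim (fun i => T * c i) fun a => -(s * d a)) (Sum.elim x y)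
  simp only [Fintype.sum_sum_type, Sum.elim_inl, Sum.elim_inr, Finset.sum_add_distrib] at h
  have h1 : ∑ i, ∑ j, T * c i * (T * c j) * k (x i) (x j) = T ^ 2 * Q := by
    simp only [Q, Finset.mul_sum]
    exact Finset.sum_congr rfl fun i _ => Finset.sum_congr rfl fun j _ => by ring
  have h2 : ∑ i, ∑ a, T * c i * -(s * d a) * k (x i) (y a) = -(s * T) * R := by
    simp only [R, Finset.mul_sum]
    exact Finset.sum_congr rfl fun i _ => Finset.sum_congr rfl fun a _ => by ring
  have h3 : ∑ a, ∑ i, -(s * d a) * (T * c i) * k (y a) (x i) = -(s * T) * R := by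
    rw [Finset.sum_comm, ← h2]
    exact Finset.sum_congr rfl fun i _ => Finset.sum_congr rfl fun a _ => by rw [hsymm]; ring
  have h4 : ∑ a, ∑ b, -(s * d a) * -(s * d b) * k (y a) (y b) = s ^ 2 * P := by
    simp only [P, Finset.mul_sum]
    exact Finset.sum_congr rfl fun a _ => Finset.sum_congr rfl fun b _ => by ring
  have g1 : ∑ a, ∑ b, d a * d b * (s ^ 2 * k (y a) (y b)) = s ^ 2 * P := by
    simp only [P, Finset.mul_sum]
    exact Finset.sum_congr rfl fun a _ => Finset.sum_congr rfl fun b _ => by ring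
  have g2 : ∑ a, d a * (s * ∑ i, c i * k (x i) (y a)) = s * R := by
    simp only [R, Finset.mul_sum]
    rw [Finset.sum_comm]
    exact Finset.sum_congr rfl fun i _ => Finset.sum_congr rfl fun a _ => by ring
  have e := Finset.sum_sum_mul_mul_sub_sub_add d (fun a b => s ^ 2 * k (y a) (y b))
    (fun a => s * ∑ i, c i * k (x i) (y a)) Q
  rw [show ∑ a, ∑ b, d a * d b * _root_.shiftedKernel k c x s (y a) (y b) = _ from e, g1, g2]
  rw [h1, h2, h3, h4] at h
  linarith

theorem MeasureTheory.MeasurePreserving.integral_comp_of_aestronglyMeasurable {α β : Type*}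
    [MeasurableSpace α] [MeasurableSpace β] {μ : Measure α} {ν : Measure β} {f : α → β}
    (hf : MeasurePreserving f μ ν) {g : β → ℝ} (hg : AEStronglyMeasurable g ν) :
    ∫ x, g (f x) ∂μ = ∫ y, g y ∂ν := by
  rw [← hf.map_eq] at hg ⊢
  rw [integral_map hf.aemeasurable hg]

theorem MeasureTheory.measurePreserving_eval_prod_eval {ι D : Type*} [Fintype ι]
    [MeasurableSpace D] (ν : Measure D) [IsProbabilityMeasure ν] {i j : ι} (hij : i ≠ j) :
    MeasurePreserving (fun x : ι → D => (x i, x j)) (Measure.pi fun _ => ν) (ν.prod ν) := by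
  refine ⟨by fun_prop, ?_⟩
  have hind := (iIndepFun_pi (μ := fun _ : ι => ν) (X := fun _ => id)
    fun _ => aemeasurable_id).indepFun hij
  dsimp only [id] at hind
  rw [indepFun_iff_map_prod_eq_prod_map_map (measurable_pi_apply i).aemeasurable
    (measurable_pi_apply j).aemeasurable] at hind
  simpa [(measurePreserving_eval (fun _ : ι => ν) i).map_eq,
    (measurePreserving_eval (fun _ : ι => ν) j).map_eq] using hind

section

variable {D : Type*} [MeasurableSpace D] {ν : Measure D} [IsProbabilityMeasure ν]
  {g : D → D → ℝ}

theorem integral_pi_sum_sum {ι : Type*} [Fintype ι]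
    (hg : Integrable (fun p : D × D => g p.1 p.2) (ν.prod ν))
    (hdiag : Integrable (fun u => g u u) ν) :
    ∫ x, ∑ i : ι, ∑ j, g (x i) (x j) ∂(Measure.pi fun _ => ν) =
      Fintype.card ι * ∫ u, g u u ∂ν +
        Fintype.card ι * (Fintype.card ι - 1) * ∫ p, g p.1 p.2 ∂(ν.prod ν) := by
  classical
  have hterm : ∀ i j : ι, Integrable (fun x : ι → D => g (x i) (x j)) (Measure.pi fun _ => ν) ∧
      ∫ x, g (x i) (x j) ∂(Measure.pi fun _ => ν) =
        if i = j then ∫ u, g u u ∂ν else ∫ p, g p.1 p.2 ∂(ν.prod ν) := by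
    intro i j
    by_cases hij : i = j
    · subst hij
      have hmp := measurePreserving_eval (fun _ : ι => ν) i
      exact ⟨hmp.integrable_comp_of_integrable hdiag, by
        rw [if_pos rfl, hmp.integral_comp_of_aestronglyMeasurable (g := fun u => g u u)
          hdiag.aestronglyMeasurable]⟩
    · have hmp := measurePreserving_eval_prod_eval ν hij
      exact ⟨hmp.integrable_comp_of_integrable hg, by
        rw [if_neg hij, hmp.integral_comp_of_aestronglyMeasurable (g := fun p => g p.1 p.2)
          hg.aestronglyMeasurable]⟩
  rw [integral_finsetSum _ fun i _ => integrable_finsetSum _ fun j _ => (hterm i j).1]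
  simp only [integral_finsetSum _ fun j _ => (hterm _ j).1, fun i j => (hterm i j).2]
  have hrow : ∀ i : ι, ∑ j, (if i = j then ∫ u, g u u ∂ν else ∫ p, g p.1 p.2 ∂(ν.prod ν)) =
      ∫ u, g u u ∂ν + (Fintype.card ι - 1) * ∫ p, g p.1 p.2 ∂(ν.prod ν) := fun i => by
    rw [← Finset.add_sum_erase _ _ (Finset.mem_univ i), if_pos rfl,
      Finset.sum_congr rfl fun j hj => if_neg (Finset.ne_of_mem_erase hj).symm, Finset.sum_const,
      Finset.card_erase_of_mem (Finset.mem_univ i), Finset.card_univ, nsmul_eq_mul,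
      Nat.cast_sub (Fintype.card_pos_iff.mpr ⟨i⟩), Nat.cast_one]
  simp only [hrow, Finset.sum_const, Finset.card_univ, nsmul_eq_mul]
  ring

theorem IsPosSemidefKernel.integral_prod_nonneg_of_integrable_diag
    (hk : IsPosSemidefKernel g) (hg : Integrable (fun p : D × D => g p.1 p.2) (ν.prod ν))
    (hdiag : Integrable (fun u => g u u) ν) : 0 ≤ ∫ p, g p.1 p.2 ∂(ν.prod ν) := by
  refine nonneg_of_forall_nat_mul_add_nonneg (a := ∫ u, g u u ∂ν) fun n => ?_
  have h := integral_pi_sum_sum (ι := Fin n) hg hdiag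
  rw [Fintype.card_fin] at h
  rw [← h]
  exact integral_nonneg fun x => by simpa using hk n 1 x

theorem IsPosSemidefKernel.integral_prod_nonneg
    (hk : IsPosSemidefKernel g) (hg : Integrable (fun p : D × D => g p.1 p.2) (ν.prod ν))
    (hdiag : AEStronglyMeasurable (fun u => g u u) ν) : 0 ≤ ∫ p, g p.1 p.2 ∂(ν.prod ν) := by
  set q := hdiag.mk
  have hq : Measurable q := hdiag.stronglyMeasurable_mk.measurable
  let w : ℕ → D → ℝ := fun M => {u | q u ≤ M}.indicator 1
  have hw : ∀ M, Measurable (w M) := fun M =>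
    measurable_one.indicator (measurableSet_le hq measurable_const)
  have hw_le : ∀ M u v, ‖w M u * w M v‖ ≤ 1 := fun M u v => by
    by_cases hu : q u ≤ M <;> by_cases hv : q v ≤ M <;> simp [w, hu, hv]
  have hw_eventually : ∀ u, ∀ᶠ M in atTop, w M u = 1 := fun u =>
    (tendsto_natCast_atTop_atTop.eventually_ge_atTop (q u)).mono fun M h => by simp [w, h]
  have hww : ∀ M, AEStronglyMeasurable (fun p : D × D => w M p.1 * w M p.2) (ν.prod ν) := fun M =>
    (((hw M).comp measurable_fst).mul ((hw M).comp measurable_snd)).aestronglyMeasurable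
  have htrunc : ∀ M, 0 ≤ ∫ p, w M p.1 * w M p.2 * g p.1 p.2 ∂(ν.prod ν) := fun M =>
    (hk.mul_weight (w M)).integral_prod_nonneg_of_integrable_diag
      (hg.bdd_mul (hww M) (Eventually.of_forall fun p => hw_le M p.1 p.2))
      (Integrable.of_bound (((hw M).mul (hw M)).aestronglyMeasurable.mul hdiag) M (by
        filter_upwards [hdiag.ae_eq_mk] with u hu
        by_cases h : q u ≤ M
        · have h1 : w M u = 1 := by simp [w, h]
          rw [h1, one_mul, one_mul, Real.norm_of_nonneg (hk.diag_nonneg u), hu]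
          exact h
        · simp [w, h]))
  have hlim : Tendsto (fun M : ℕ => ∫ p, w M p.1 * w M p.2 * g p.1 p.2 ∂(ν.prod ν)) atTop
      (𝓝 (∫ p, g p.1 p.2 ∂(ν.prod ν))) := by
    refine tendsto_integral_of_dominated_convergence (fun p => ‖g p.1 p.2‖)
      (fun M => (hww M).mul hg.aestronglyMeasurable) hg.norm
      (fun M => Eventually.of_forall fun p => ?_) (Eventually.of_forall fun p => ?_)
    · rw [norm_mul]
      exact mul_le_of_le_one_left (norm_nonneg _) (hw_le M p.1 p.2)
    · refine tendsto_const_nhds.congr' ?_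
      filter_upwards [hw_eventually p.1, hw_eventually p.2] with M h1 h2
      simp [h1, h2]
  exact ge_of_tendsto hlim (Eventually.of_forall htrunc)

end

section

variable {D ι : Type*} [Fintype ι] [MeasurableSpace D] {ν : Measure D} {k : D → D → ℝ}

theorem integrable_sum_mul_kernel (hint : ∀ x, Integrable (fun u => k x u) ν) (c : ι → ℝ)
    (x : ι → D) : Integrable (fun u => ∑ i, c i * k (x i) u) ν :=
  integrable_finsetSum _ fun i _ => (hint (x i)).const_mul (c i)

theorem aestronglyMeasurable_shiftedKernel_diag (hint : ∀ x, Integrable (fun u => k x u) ν)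
    (hdiag : AEStronglyMeasurable (fun u => k u u) ν) (c : ι → ℝ) (x : ι → D) (s : ℝ) :
    AEStronglyMeasurable (fun u => shiftedKernel k c x s u u) ν := by
  have hF := (integrable_sum_mul_kernel hint c x).aestronglyMeasurable
  exact (((hdiag.const_mul _).sub (hF.const_mul s)).sub (hF.const_mul s)).add
    aestronglyMeasurable_const

variable [IsProbabilityMeasure ν]

theorem integrable_shiftedKernel (hint : ∀ x, Integrable (fun u => k x u) ν)
    (hk2 : Integrable (fun p : D × D => k p.1 p.2) (ν.prod ν)) (c : ι → ℝ) (x : ι → D) (s : ℝ) :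
    Integrable (fun p : D × D => shiftedKernel k c x s p.1 p.2) (ν.prod ν) := by
  have hF := integrable_sum_mul_kernel hint c x
  exact (((hk2.const_mul _).sub ((hF.comp_fst ν).const_mul s)).sub
    ((hF.comp_snd ν).const_mul s)).add (integrable_const _)

theorem integral_prod_shiftedKernel (hint : ∀ x, Integrable (fun u => k x u) ν)
    (hk2 : Integrable (fun p : D × D => k p.1 p.2) (ν.prod ν)) (c : ι → ℝ) (x : ι → D) (s : ℝ) :
    ∫ p, shiftedKernel k c x s p.1 p.2 ∂(ν.prod ν) =
      s ^ 2 * ∫ p, k p.1 p.2 ∂(ν.prod ν) - 2 * s * ∑ i, c i * ∫ u, k (x i) u ∂ν +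
        ∑ i, ∑ j, c i * c j * k (x i) (x j) := by
  have hF := integrable_sum_mul_kernel hint c x
  have hFint : ∫ u, ∑ i, c i * k (x i) u ∂ν = ∑ i, c i * ∫ u, k (x i) u ∂ν := by
    rw [integral_finsetSum _ fun i _ => (hint (x i)).const_mul (c i)]
    simp only [integral_const_mul]
  have h1 := (hk2.const_mul (s ^ 2)).sub' ((hF.comp_fst ν).const_mul s)
  have h2 := h1.sub' ((hF.comp_snd ν).const_mul s)
  simp only [shiftedKernel]
  rw [integral_add h2 (integrable_const _), integral_sub h1 ((hF.comp_snd ν).const_mul s),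
    integral_sub (hk2.const_mul _) ((hF.comp_fst ν).const_mul s), integral_const_mul,
    integral_const_mul, integral_const_mul, integral_fun_fst (fun u => ∑ i, c i * k (x i) u),
    integral_fun_snd (fun u => ∑ i, c i * k (x i) u), hFint]
  simp only [probReal_univ, smul_eq_mul, one_mul, integral_const, add_left_inj]
  ring

theorem integral_sub_sub_add_eq_zero (hint : ∀ x, Integrable (fun u => k x u) ν)
    (hk2 : Integrable (fun p : D × D => k p.1 p.2) (ν.prod ν)) (x : D) :
    ∫ u, (k x u - (∫ v, k x v ∂ν) - (∫ v, k u v ∂ν) + ∫ p, k p.1 p.2 ∂(ν.prod ν)) ∂ν = 0 := by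
  have h1 := (hint x).sub' (integrable_const (∫ v, k x v ∂ν))
  rw [integral_add (h1.sub' hk2.integral_prod_left) (integrable_const _),
    integral_sub h1 hk2.integral_prod_left, integral_sub (hint x) (integrable_const _),
    integral_integral hk2]
  simp

end

theorem centred_kernel_k0_psd_and_nu_centred
    {D : Type*} [MeasurableSpace D] (ν : Measure D) [IsProbabilityMeasure ν]
    (k : D → D → ℝ) (hsymm : ∀ x y, k x y = k y x)
    (hpsd : ∀ (n : ℕ) (c : Fin n → ℝ) (x : Fin n → D),
      0 ≤ ∑ i, ∑ j, c i * c j * k (x i) (x j))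
    (hmom : Integrable (fun u => Real.sqrt (k u u)) ν)
    (hint : ∀ x, Integrable (fun u => k x u) ν)
    (hint2 : Integrable (fun p : D × D => k p.1 p.2) (ν.prod ν))
    (k₀ : D → D → ℝ)
    (hk₀ : ∀ x y, k₀ x y = k x y - (∫ u, k x u ∂ν) - (∫ u, k y u ∂ν)
        + ∫ p : D × D, k p.1 p.2 ∂(ν.prod ν)) :
    (∀ (n : ℕ) (c : Fin n → ℝ) (x : Fin n → D),
        0 ≤ ∑ i, ∑ j, c i * c j * k₀ (x i) (x j)) ∧
    (∀ x, ∫ u, k₀ x u ∂ν = 0) := by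
  have hk : IsPosSemidefKernel k := hpsd
  have hdiag : AEStronglyMeasurable (fun u => k u u) ν :=
    (hmom.1.pow 2).congr (Eventually.of_forall fun u => Real.sq_sqrt (hk.diag_nonneg u))
  refine ⟨fun n c x => ?_, fun x => ?_⟩
  · have h := (hk.shiftedKernel hsymm c x (∑ i, c i)).integral_prod_nonneg
      (integrable_shiftedKernel hint hint2 c x _)
      (aestronglyMeasurable_shiftedKernel_diag hint hdiag c x _)
    rw [integral_prod_shiftedKernel hint hint2] at h
    simp only [hk₀]
    rw [Finset.sum_sum_mul_mul_sub_sub_add c (fun i j => k (x i) (x j))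
      (fun i => ∫ u, k (x i) u ∂ν)]
    linarith
  · simpa only [hk₀] using integral_sub_sub_add_eq_zero hint hint2 x
end

section
/- The kernel k_harm(x,y) = exp((x₁y₁ + x₂y₂)/θ²) · cos((x₂y₁ − x₁y₂)/θ²) on ℝ² × ℝ² is argumentwise harmonic: for every fixed y ∈ ℝ², the function x ↦ k_harm(x,y) satisfies Δ_x k_harm(x, y) = ∂²/∂x₁² k_harm + ∂²/∂x₂² k_harm = 0. -/
/-!
Writing `z = x₁ + i x₂` and `w = y₁ - i y₂`, the kernel is `Re exp (z w / θ²)`, the real part of a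
function holomorphic in `z`, hence harmonic in `x`. Concretely, each `x ↦ exp (p x₁ + q x₂) cos (r x₁ + s x₂)`
has Laplacian `(p² + q² - r² - s²) exp · cos - 2 (p r + q s) exp · sin`, and for the kernel
`(p, q, r, s) = (y₁, y₂, -y₂, y₁) / θ²` both coefficients vanish.
-/

open Real

lemma deriv_exp_affine_mul_trig (a b c d P Q : ℝ) :
    deriv (fun t => exp (a * t + b) * (P * cos (c * t + d) + Q * sin (c * t + d))) =
      fun t => exp (a * t + b) *
        ((a * P + c * Q) * cos (c * t + d) + (a * Q - c * P) * sin (c * t + d)) := by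
  funext t
  have ha : HasDerivAt (fun t : ℝ => a * t + b) a t := by
    simpa using ((hasDerivAt_id t).const_mul a).add_const b
  have hc : HasDerivAt (fun t : ℝ => c * t + d) c t := by
    simpa using ((hasDerivAt_id t).const_mul c).add_const d
  have h : HasDerivAt (fun t => exp (a * t + b) * (P * cos (c * t + d) + Q * sin (c * t + d))) _ t :=
    ha.exp.mul ((hc.cos.const_mul P).add (hc.sin.const_mul Q))
  rw [h.deriv]
  ring

lemma deriv_deriv_exp_affine_mul_cos (a b c d : ℝ) :
    deriv (deriv fun t => exp (a * t + b) * cos (c * t + d)) =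
      fun t => exp (a * t + b) *
        ((a ^ 2 - c ^ 2) * cos (c * t + d) - 2 * a * c * sin (c * t + d)) := by
  have h : (fun t => exp (a * t + b) * cos (c * t + d)) =
      fun t => exp (a * t + b) * (1 * cos (c * t + d) + 0 * sin (c * t + d)) := by
    funext t; ring
  rw [h, deriv_exp_affine_mul_trig, deriv_exp_affine_mul_trig]
  funext t; ring

lemma laplacian_exp_mul_cos_eq_zero {p q r s : ℝ} (hnorm : p ^ 2 + q ^ 2 = r ^ 2 + s ^ 2)
    (horth : p * r + q * s = 0) (x₁ x₂ : ℝ) :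
    deriv (deriv fun t => exp (p * t + q * x₂) * cos (r * t + s * x₂)) x₁ +
      deriv (deriv fun t => exp (q * t + p * x₁) * cos (s * t + r * x₁)) x₂ = 0 := by
  rw [deriv_deriv_exp_affine_mul_cos, deriv_deriv_exp_affine_mul_cos]
  beta_reduce
  rw [show q * x₂ + p * x₁ = p * x₁ + q * x₂ by ring, show s * x₂ + r * x₁ = r * x₁ + s * x₂ by ring]
  linear_combination exp (p * x₁ + q * x₂) *
    (hnorm * cos (r * x₁ + s * x₂) - 2 * horth * sin (r * x₁ + s * x₂))

theorem kharm_is_argumentwise_harmonic_general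
    (θ : ℝ) (kh : ℝ → ℝ → ℝ → ℝ → ℝ)
    (hk : ∀ x₁ x₂ y₁ y₂, kh x₁ x₂ y₁ y₂ =
        Real.exp ((x₁ * y₁ + x₂ * y₂) / θ ^ 2) *
          Real.cos ((x₂ * y₁ - x₁ * y₂) / θ ^ 2)) :
    ∀ x₁ x₂ y₁ y₂,
      deriv (deriv (fun t => kh t x₂ y₁ y₂)) x₁ +
        deriv (deriv (fun t => kh x₁ t y₁ y₂)) x₂ = 0 := by
  intro x₁ x₂ y₁ y₂
  set p := y₁ / θ ^ 2
  set q := y₂ / θ ^ 2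
  have h₁ : (fun t => kh t x₂ y₁ y₂) = fun t => exp (p * t + q * x₂) * cos (-q * t + p * x₂) := by
    funext t; rw [hk]; congr 2 <;> ring
  have h₂ : (fun t => kh x₁ t y₁ y₂) = fun t => exp (q * t + p * x₁) * cos (p * t + -q * x₁) := by
    funext t; rw [hk]; congr 2 <;> ring
  rw [h₁, h₂]
  exact laplacian_exp_mul_cos_eq_zero (by ring) (by ring) x₁ x₂

theorem kharm_is_argumentwise_harmonic
    (θ : ℝ) (hθ : 0 < θ) (kh : ℝ → ℝ → ℝ → ℝ → ℝ)
    (hk : ∀ x₁ x₂ y₁ y₂, kh x₁ x₂ y₁ y₂ =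
        Real.exp ((x₁ * y₁ + x₂ * y₂) / θ ^ 2) *
          Real.cos ((x₂ * y₁ - x₁ * y₂) / θ ^ 2)) :
    ∀ x₁ x₂ y₁ y₂,
      deriv (deriv (fun t => kh t x₂ y₁ y₂)) x₁ +
        deriv (deriv (fun t => kh x₁ t y₁ y₂)) x₂ = 0 :=
  kharm_is_argumentwise_harmonic_general θ kh hk
end

section
/- Under the same assumptions, the conditional covariance kernel c(x, x') = k(x, x') − k(x)ᵀ K⁻¹ k(x') of Gaussian process regression is again argumentwise T-invariant: T(c(·, x')) = c(·, x') for every x' ∈ D. -/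
/-!
The section `c(·, x')` is `k(·, x')` minus a linear combination of the sections `k(·, xᵢ)`,
so it lies in the span of the sections of `k`; a linear map fixing every section of `k`
fixes their span.
-/

theorem conditional_kernel_section_mem_span {R D ι : Type*} [CommRing R] [Fintype ι]
    (k : D → D → R) (X : ι → D) (A : Matrix ι ι R) (x' : D) :
    (fun x => k x x' - ∑ i, ∑ j, k x (X i) * A i j * k x' (X j)) ∈
      Submodule.span R (Set.range fun y x => k x y) := by
  have hsection : ∀ y, (fun x => k x y) ∈ Submodule.span R (Set.range fun y x => k x y) :=
    fun y => Submodule.subset_span ⟨y, rfl⟩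
  have hcomb : (fun x => k x x' - ∑ i, ∑ j, k x (X i) * A i j * k x' (X j)) =
      (fun x => k x x') - ∑ i, (∑ j, A i j * k x' (X j)) • fun x => k x (X i) := by
    funext x
    simp only [Pi.sub_apply, Finset.sum_apply, Pi.smul_apply, smul_eq_mul, Finset.sum_mul]
    congr 1
    refine Finset.sum_congr rfl fun i _ => Finset.sum_congr rfl fun j _ => ?_
    ring
  rw [hcomb]
  exact Submodule.sub_mem _ (hsection x')
    (Submodule.sum_mem _ fun i _ => Submodule.smul_mem _ _ (hsection (X i)))

theorem gpr_conditional_kernel_is_argumentwise_T_invariant_general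
    {D : Type*} (k : D → D → ℝ) (T : (D → ℝ) →ₗ[ℝ] (D → ℝ))
    (hinv : ∀ x' : D, T (fun x => k x x') = fun x => k x x')
    (n : ℕ) (X : Fin n → D)
    (K : Matrix (Fin n) (Fin n) ℝ)
    (c : D → D → ℝ)
    (hc : ∀ x x', c x x' = k x x' - ∑ i, ∑ j, k x (X i) * K⁻¹ i j * k x' (X j)) :
    ∀ x' : D, T (fun x => c x x') = fun x => c x x' := by
  intro x'
  have hfix :
      Set.EqOn T (LinearMap.id : (D → ℝ) →ₗ[ℝ] D → ℝ) (Set.range fun y x => k x y) :=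
    Set.forall_mem_range.2 hinv
  rw [show (fun x => c x x') = _ from funext fun x => hc x x']
  exact LinearMap.eqOn_span hfix (conditional_kernel_section_mem_span k X K⁻¹ x')

theorem gpr_conditional_kernel_is_argumentwise_T_invariant
    {D : Type*} (k : D → D → ℝ) (T : (D → ℝ) →ₗ[ℝ] (D → ℝ))
    (hinv : ∀ x' : D, T (fun x => k x x') = fun x => k x x')
    (n : ℕ) (X : Fin n → D)
    (K : Matrix (Fin n) (Fin n) ℝ) (hK : ∀ i j, K i j = k (X i) (X j))
    (hKinv : IsUnit K.det)
    (c : D → D → ℝ)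
    (hc : ∀ x x', c x x' = k x x' - ∑ i, ∑ j, k x (X i) * K⁻¹ i j * k x' (X j)) :
    ∀ x' : D, T (fun x => c x x') = fun x => c x x' :=
  gpr_conditional_kernel_is_argumentwise_T_invariant_general k T hinv n X K c hc
end

section
/- Let T = Σ_{i=1}^q α_i T_{v_i} be a combination of composition operators and k a kernel with RKHS H such that T(k(·, x')) = k(·, x') for all x'. Then every function h in the RKHS H satisfies T(h) = h; that is, argumentwise T-invariance of the kernel implies T-invariance of all RKHS elements. -/
/-!
Invariance of the kernel says that `∑ i, α i • φ (v i x) - φ x` is orthogonal to every feature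
`φ x'`, hence to their dense span, so it vanishes; pairing it with `h` gives `T h = h`.
-/

open scoped RealInnerProductSpace

theorem Dense.eq_of_inner_left_of_span {𝕜 E : Type*} [RCLike 𝕜] [NormedAddCommGroup E]
    [InnerProductSpace 𝕜 E] {S : Set E} (hS : Dense (Submodule.span 𝕜 S : Set E)) {x y : E}
    (h : ∀ v ∈ S, inner 𝕜 x v = inner 𝕜 y v) : x = y :=
  hS.eq_of_inner_left 𝕜 fun _ hv ↦
    LinearMap.eqOn_span' (f := innerₛₗ 𝕜 x) (g := innerₛₗ 𝕜 y) h hv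

theorem argumentwise_invariant_kernel_implies_invariant_RKHS_elements
    {D : Type*} {H : Type*} [NormedAddCommGroup H] [InnerProductSpace ℝ H]
    (φ : D → H) (hdense : Dense (Submodule.span ℝ (Set.range φ) : Set H))
    (k : D → D → ℝ) (hk : ∀ x x', k x x' = ⟪φ x, φ x'⟫)
    (q : ℕ) (α : Fin q → ℝ) (v : Fin q → D → D)
    (hinv : ∀ x x', ∑ i, α i * k (v i x) x' = k x x') :
    ∀ h : H, (fun x => ∑ i, α i * ⟪h, φ (v i x)⟫) = fun x => ⟪h, φ x⟫ := by
  intro h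
  funext x
  have hfeature : ∑ i, α i • φ (v i x) = φ x := by
    refine hdense.eq_of_inner_left_of_span ?_
    rintro _ ⟨x', rfl⟩
    simpa only [sum_inner, real_inner_smul_left, hk] using hinv x x'
  calc ∑ i, α i * ⟪h, φ (v i x)⟫ = ⟪h, ∑ i, α i • φ (v i x)⟫ := by
        simp only [inner_sum, real_inner_smul_right]
    _ = ⟪h, φ x⟫ := by rw [hfeature]
end
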